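/- arXiv:2510.19494 — 2 statements merged into one kernel-verified Lean document; each statement's English description precedes it below -/
import Mathlib

section
/- (Convergence in L^p, univariate realizable form.) Let 1 ≤ p < ∞, let f* : ℝ → ℝ be p-integrable on [0, 2π] (f* ∈ L^p([0, 2π])), and let ε > 0. Then there exist a dimension d ∈ ℕ, a Hermitian matrix H ∈ M_d(ℂ), a unit vector Γ ∈ ℂ^d, and a Hermitian matrix M ∈ M_d(ℂ) such that (∫_0^{2π} |⟨Γ, e^{ixH} M e^{-ixH} Γ⟩ − f*(x)|^p dx)^{1/p} < ε. -/
open Matrix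

/-- The univariate quantum model `x ↦ ⟨Γ, e^{ixH} M e^{-ixH} Γ⟩`. -/
noncomputable def quantumModel {d : ℕ} (H M : Matrix (Fin d) (Fin d) ℂ)
    (Γ : Fin d → ℂ) (x : ℝ) : ℂ :=
  star Γ ⬝ᵥ ((NormedSpace.exp ((Complex.I * x) • H) * M *
      NormedSpace.exp ((-(Complex.I * x)) • H)).mulVec Γ)

/-!
A real trigonometric polynomial `x ↦ Re ∑ αᵢ e^{iνᵢx}` is itself a quantum model. Take `H`
diagonal with spectrum `0, ν₁, …, ν_N`, `Γ` the uniform unit vector, and `M = a e₀* + e₀ a*`,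
an "arrow" matrix supported on the row and column of the eigenvalue `0`. With `w = e^{-ixH} Γ`
the model equals `⟨w, M w⟩ = 2 Re (⟨w, a⟩ ⟨e₀, w⟩)`, and `⟨e₀, w⟩ = Γ₀` does not depend on `x`,
so only the frequencies `νᵢ` survive.

It remains to approximate `f*` in `L^p` by real trigonometric polynomials: lift `f*` to the
circle `ℝ / 2πℤ`, where the span of the characters is dense in `L^p` for `p < ∞`, and take real
parts, which cannot increase the distance to the real-valued `f*`.
-/

open Complex ComplexConjugate MeasureTheory Set
open scoped ENNReal Real

namespace Matrix

theorem exp_smul_diagonal {m : Type*} [Fintype m] [DecidableEq m] (z : ℂ) (v : m → ℂ) :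
    NormedSpace.exp (z • diagonal v) = diagonal fun j => exp (z * v j) := by
  rw [← diagonal_smul, exp_diagonal, Pi.exp_def]
  simp [Complex.exp_eq_exp_ℂ]

theorem isHermitian_vecMulVec_add_vecMulVec {m α : Type*} [NonUnitalSemiring α] [StarRing α]
    (a b : m → α) : (vecMulVec a (star b) + vecMulVec b (star a)).IsHermitian := by
  simp [IsHermitian, conjTranspose_add, add_comm]

theorem star_dotProduct_vecMulVec_add_vecMulVec_mulVec {m : Type*} [Fintype m] (a b w : m → ℂ) :
    star w ⬝ᵥ (vecMulVec a (star b) + vecMulVec b (star a)) *ᵥ w =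
      ((2 * ((star w ⬝ᵥ a) * (star b ⬝ᵥ w)).re : ℝ) : ℂ) := by
  have hconj : (star w ⬝ᵥ b) * (star a ⬝ᵥ w) = conj ((star w ⬝ᵥ a) * (star b ⬝ᵥ w)) := by
    rw [map_mul, mul_comm]
    congr 1 <;> exact star_dotProduct _ _
  rw [add_mulVec, dotProduct_add, vecMulVec_mulVec, vecMulVec_mulVec, op_smul_eq_smul,
    op_smul_eq_smul, dotProduct_smul, dotProduct_smul, smul_eq_mul, smul_eq_mul,
    mul_comm (star b ⬝ᵥ w), mul_comm (star a ⬝ᵥ w), hconj, add_conj]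

end Matrix

theorem quantumModel_eq_star_dotProduct_mulVec {d : ℕ} {H : Matrix (Fin d) (Fin d) ℂ}
    (hH : H.IsHermitian) (M : Matrix (Fin d) (Fin d) ℂ) (Γ : Fin d → ℂ) (x : ℝ) :
    quantumModel H M Γ x =
      star (NormedSpace.exp (-(I * x) • H) *ᵥ Γ) ⬝ᵥ M *ᵥ (NormedSpace.exp (-(I * x) • H) *ᵥ Γ) := by
  have hU : (NormedSpace.exp (-(I * x) • H))ᴴ = NormedSpace.exp ((I * x) • H) := by
    rw [← exp_conjTranspose, conjTranspose_smul, hH.eq]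
    simp
  rw [quantumModel, ← mulVec_mulVec, ← mulVec_mulVec, dotProduct_mulVec, star_mulVec, hU]

theorem quantumModel_diagonal_vecMulVec_add_vecMulVec {d : ℕ} {ω : Fin d → ℝ} {j₀ : Fin d}
    (hω : ω j₀ = 0) (a : Fin d → ℂ) (γ x : ℝ) :
    quantumModel (diagonal fun j => (ω j : ℂ))
        (vecMulVec a (star (Pi.single j₀ 1)) + vecMulVec (Pi.single j₀ 1) (star a)) (fun _ => γ) x =
      ((2 * γ ^ 2 * (∑ j, a j * exp (I * ω j * x)).re : ℝ) : ℂ) := by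
  have hH : (diagonal fun j => (ω j : ℂ)).IsHermitian :=
    isHermitian_diagonal_of_self_adjoint _ (funext fun j => conj_ofReal (ω j))
  rw [quantumModel_eq_star_dotProduct_mulVec hH, exp_smul_diagonal,
    star_dotProduct_vecMulVec_add_vecMulVec_mulVec]
  set S := ∑ j, a j * exp (I * ω j * x)
  set w := (diagonal fun j => exp (-(I * x) * ω j)) *ᵥ fun _ => (γ : ℂ)
  have hw₀ : star (Pi.single j₀ 1) ⬝ᵥ w = γ := by
    simp [w, hω, mulVec_diagonal]
  have hwa : star w ⬝ᵥ a = γ * S := by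
    simp only [dotProduct, neg_mul, Pi.star_apply, mulVec_diagonal, star_mul', RCLike.star_def,
      ← exp_conj, map_neg, map_mul, conj_I, conj_ofReal, neg_neg, Finset.mul_sum, w, S]
    exact Finset.sum_congr rfl fun j _ => by ring_nf
  rw [hwa, hw₀, mul_right_comm, ← ofReal_mul, re_ofReal_mul]
  congr 1
  ring

theorem exists_quantumModel_eq_re_sum {ι : Type*} [Fintype ι] (ν : ι → ℝ) (α : ι → ℂ) :
    ∃ (d : ℕ) (H M : Matrix (Fin d) (Fin d) ℂ) (Γ : Fin d → ℂ),
      H.IsHermitian ∧ M.IsHermitian ∧ star Γ ⬝ᵥ Γ = 1 ∧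
      ∀ x : ℝ, quantumModel H M Γ x = ((∑ i, α i * exp (I * ν i * x)).re : ℂ) := by
  let N := Fintype.card ι
  let e : ι ≃ Fin N := Fintype.equivFin ι
  set γ : ℝ := (√(N + 1))⁻¹
  have hγ : γ ^ 2 * (N + 1) = 1 := by
    rw [inv_pow, Real.sq_sqrt (by positivity), inv_mul_cancel₀ (by positivity)]
  let ω : Fin (N + 1) → ℝ := Fin.cons 0 (ν ∘ e.symm)
  let a : Fin (N + 1) → ℂ := Fin.cons 0 fun i => ((N + 1) / 2 : ℂ) * α (e.symm i)
  refine ⟨N + 1, diagonal fun j => (ω j : ℂ), _, fun _ => γ,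
    isHermitian_diagonal_of_self_adjoint _ (funext fun j => conj_ofReal (ω j)),
    isHermitian_vecMulVec_add_vecMulVec a (Pi.single 0 1), ?_, fun x => ?_⟩
  · simp only [dotProduct, Pi.star_apply, Complex.star_def, conj_ofReal, Finset.sum_const,
      Finset.card_univ, Fintype.card_fin, nsmul_eq_mul]
    exact_mod_cast (by push_cast; linarith : ((N + 1 : ℕ) : ℝ) * (γ * γ) = 1)
  have hsum : ∑ j, a j * exp (I * ω j * x) =
      ((N + 1) / 2 : ℝ) * ∑ i, α i * exp (I * ν i * x) := by
    rw [Fin.sum_univ_succ, ← e.symm.sum_comp]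
    simp [a, ω, Finset.mul_sum, mul_assoc]
  rw [quantumModel_diagonal_vecMulVec_add_vecMulVec (rfl : ω 0 = 0), hsum, re_ofReal_mul]
  congr 1
  linear_combination (∑ i, α i * exp (I * ν i * x)).re * hγ

namespace AddCircle

variable {T : ℝ} [Fact (0 < T)] {q : ℝ≥0∞} [Fact (1 ≤ q)]

theorem exists_eLpNorm_sub_linearCombination_fourier_lt_haar (hq : q ≠ ∞)
    {F : AddCircle T → ℂ} (hF : MemLp F q haarAddCircle) {δ : ℝ≥0∞} (hδ : δ ≠ 0) :
    ∃ c : ℤ →₀ ℂ,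
      eLpNorm (F - ⇑(Finsupp.linearCombination ℂ fourier c)) q haarAddCircle < δ := by
  have hmem : hF.toLp F ∈ (Submodule.span ℂ (range (fourierLp (T := T) q))).topologicalClosure := by
    rw [span_fourierLp_closure_eq_top hq]; trivial
  obtain ⟨P, hP, hFP⟩ := EMetric.mem_closure_iff.1 hmem δ (pos_iff_ne_zero.2 hδ)
  rw [← Finsupp.range_linearCombination] at hP
  obtain ⟨c, rfl⟩ := hP
  refine ⟨c, ?_⟩
  have hc : Finsupp.linearCombination ℂ (fourierLp (T := T) q) c =
      ContinuousMap.toLp q haarAddCircle ℂ (Finsupp.linearCombination ℂ fourier c) :=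
    (Finsupp.apply_linearCombination ℂ (ContinuousMap.toLp (E := ℂ) q haarAddCircle ℂ).toLinearMap
      fourier c).symm
  rwa [hc, Lp.edist_def,
    eLpNorm_congr_ae (hF.coeFn_toLp.sub (ContinuousMap.coeFn_toLp _ _))] at hFP

theorem exists_eLpNorm_sub_linearCombination_fourier_lt (hq : q ≠ ∞)
    {F : AddCircle T → ℂ} (hF : MemLp F q) {δ : ℝ≥0∞} (hδ : δ ≠ 0) :
    ∃ c : ℤ →₀ ℂ, eLpNorm (F - ⇑(Finsupp.linearCombination ℂ fourier c)) q < δ := by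
  have hT : ENNReal.ofReal T ≠ 0 := ENNReal.ofReal_ne_zero_iff.2 Fact.out
  have hK : ENNReal.ofReal T ^ (1 / q).toReal ≠ ∞ :=
    ENNReal.rpow_ne_top_of_nonneg ENNReal.toReal_nonneg ENNReal.ofReal_ne_top
  have hhaar : (haarAddCircle : Measure (AddCircle T)) ≤ (ENNReal.ofReal T)⁻¹ • volume := by
    rw [volume_eq_smul_haarAddCircle, smul_smul, ENNReal.inv_mul_cancel hT ENNReal.ofReal_ne_top,
      one_smul]
  obtain ⟨c, hc⟩ := exists_eLpNorm_sub_linearCombination_fourier_lt_haar hq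
    (hF.of_measure_le_smul (ENNReal.inv_ne_top.2 hT) hhaar) (ENNReal.div_pos hδ hK).ne'
  refine ⟨c, ?_⟩
  rw [volume_eq_smul_haarAddCircle, eLpNorm_smul_measure_of_ne_top hq, smul_eq_mul]
  exact ENNReal.mul_lt_of_lt_div' hc

theorem exists_eLpNorm_sub_linearCombination_fourier_lt_Ioc (hq : q ≠ ∞) {t : ℝ}
    {f : ℝ → ℂ} (hf : MemLp f q (volume.restrict (Ioc t (t + T)))) {δ : ℝ≥0∞} (hδ : δ ≠ 0) :
    ∃ c : ℤ →₀ ℂ, eLpNorm (fun x => f x - Finsupp.linearCombination ℂ fourier c (x : AddCircle T))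
      q (volume.restrict (Ioc t (t + T))) < δ := by
  obtain ⟨c, hc⟩ := exists_eLpNorm_sub_linearCombination_fourier_lt hq hf.memLp_liftIoc hδ
  refine ⟨c, lt_of_eq_of_lt ?_ hc⟩
  set P := Finsupp.linearCombination ℂ fourier c
  have hlift : (liftIoc T t f - ⇑P) ∘ ((↑) : ℝ → AddCircle T) =ᵐ[volume.restrict (Ioc t (t + T))]
      fun x => f x - P x := by
    filter_upwards [ae_restrict_mem measurableSet_Ioc] with x hx
    simp [liftIoc_coe_apply hx]
  rw [← eLpNorm_congr_ae hlift, eLpNorm_comp_measurePreserving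
    (hf.memLp_liftIoc.aestronglyMeasurable.sub P.continuous.aestronglyMeasurable)
    (AddCircle.measurePreserving_mk T t)]

end AddCircle

theorem linearCombination_fourier_coe_two_pi (c : ℤ →₀ ℂ) (x : ℝ) :
    Finsupp.linearCombination ℂ fourier c (x : AddCircle (2 * π)) =
      ∑ n ∈ c.support, c n * exp (I * (n : ℝ) * x) := by
  simp only [Finsupp.linearCombination_apply, Finsupp.sum, ContinuousMap.coe_sum,
    Finset.sum_apply, ContinuousMap.coe_smul, Pi.smul_apply, fourier_coe_apply, smul_eq_mul]
  refine Finset.sum_congr rfl fun n _ => ?_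
  congr 2
  field_simp
  push_cast
  ring

theorem Complex.norm_ofReal_re_sub_le (z : ℂ) (r : ℝ) : ‖(z.re : ℂ) - r‖ ≤ ‖(r : ℂ) - z‖ :=
  calc ‖(z.re : ℂ) - r‖ = |((r : ℂ) - z).re| := by
        rw [← ofReal_sub, norm_real, Real.norm_eq_abs, sub_re, ofReal_re, abs_sub_comm]
    _ ≤ ‖(r : ℂ) - z‖ := abs_re_le_norm _

theorem intervalIntegral_norm_rpow_rpow_lt_of_eLpNorm_lt {E : Type*} [NormedAddCommGroup E]
    {a b p ε : ℝ} (hab : a ≤ b) (hp : 0 < p) {g : ℝ → E}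
    (hg : AEStronglyMeasurable g (volume.restrict (Ioc a b)))
    (h : eLpNorm g (ENNReal.ofReal p) (volume.restrict (Ioc a b)) < ENNReal.ofReal ε) :
    (∫ x in a..b, ‖g x‖ ^ p) ^ (1 / p) < ε := by
  rw [MemLp.eLpNorm_eq_integral_rpow_norm (ENNReal.ofReal_ne_zero_iff.2 hp) ENNReal.ofReal_ne_top
    ⟨hg, h.trans_le le_top⟩, ENNReal.ofReal_lt_ofReal_iff', ENNReal.toReal_ofReal hp.le] at h
  rw [intervalIntegral.integral_of_le hab, one_div]
  exact h.1

theorem exists_re_sum_exp_approx_Lp {p : ℝ} (hp : 1 ≤ p) {f : ℝ → ℝ}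
    (hf : MemLp f (ENNReal.ofReal p) (volume.restrict (Icc 0 (2 * π)))) {ε : ℝ} (hε : 0 < ε) :
    ∃ c : ℤ →₀ ℂ, (∫ x in (0 : ℝ)..(2 * π),
      ‖((∑ n ∈ c.support, c n * exp (I * (n : ℝ) * x)).re : ℂ) - f x‖ ^ p) ^ (1 / p) < ε := by
  have : Fact (1 ≤ ENNReal.ofReal p) := ⟨ENNReal.one_le_ofReal.2 hp⟩
  have : Fact (0 < 2 * π) := ⟨Real.two_pi_pos⟩
  have hIoc : MemLp (fun x => (f x : ℂ)) (ENNReal.ofReal p) (volume.restrict (Ioc 0 (0 + 2 * π))) :=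
    (hf.mono_measure (Measure.restrict_mono (by simp [Ioc_subset_Icc_self]) le_rfl)).ofReal
  obtain ⟨c, hc⟩ := AddCircle.exists_eLpNorm_sub_linearCombination_fourier_lt_Ioc
    ENNReal.ofReal_ne_top hIoc (ENNReal.ofReal_ne_zero_iff.2 hε)
  simp only [linearCombination_fourier_coe_two_pi, zero_add] at hc hIoc
  refine ⟨c, intervalIntegral_norm_rpow_rpow_lt_of_eLpNorm_lt Real.two_pi_pos.le (by linarith) ?_
    ((eLpNorm_mono fun x => ?_).trans_lt hc)⟩
  · refine AEStronglyMeasurable.sub (Continuous.aestronglyMeasurable ?_) hIoc.1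
    fun_prop
  · simpa only [norm_norm] using norm_ofReal_re_sub_le _ _

/-- Convergence in `L^p`: quantum models approximate `p`-integrable functions on
`[0, 2π]` in the `L^p` norm. -/
theorem quantumModel_dense_Lp (p : ℝ) (hp : 1 ≤ p) (fstar : ℝ → ℝ)
    (hfstar : MeasureTheory.MemLp fstar (ENNReal.ofReal p)
      (MeasureTheory.volume.restrict (Set.Icc 0 (2 * Real.pi))))
    (ε : ℝ) (hε : 0 < ε) :
    ∃ (d : ℕ) (H M : Matrix (Fin d) (Fin d) ℂ) (Γ : Fin d → ℂ),
      H.IsHermitian ∧ M.IsHermitian ∧ star Γ ⬝ᵥ Γ = 1 ∧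
      (∫ x in (0 : ℝ)..(2 * Real.pi),
        ‖quantumModel H M Γ x - (fstar x : ℂ)‖ ^ p) ^ (1 / p) < ε := by
  obtain ⟨c, hc⟩ := exists_re_sum_exp_approx_Lp hp hfstar hε
  obtain ⟨d, H, M, Γ, hH, hM, hΓ, hqm⟩ :=
    exists_quantumModel_eq_re_sum (fun n : c.support => ((n : ℤ) : ℝ)) (fun n => c n)
  refine ⟨d, H, M, Γ, hH, hM, hΓ, ?_⟩
  have hre (x : ℝ) :
      quantumModel H M Γ x = ((∑ n ∈ c.support, c n * exp (I * (n : ℝ) * x)).re : ℂ) := by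
    rw [hqm, Finset.sum_coe_sort c.support fun n : ℤ => c n * exp (I * (n : ℝ) * x)]
  simpa only [hre] using hc
end

section
/- (Convergence in H¹, univariate realizable form.) Let f* : ℝ → ℝ be twice continuously differentiable, let 0 < α < β < 2π, and let ε > 0. Then there exist a dimension d ∈ ℕ, a Hermitian matrix H ∈ M_d(ℂ), a unit vector Γ ∈ ℂ^d, and a Hermitian matrix M ∈ M_d(ℂ) such that, writing f(x) = ⟨Γ, e^{ixH} M e^{-ixH} Γ⟩ (a real-valued smooth function of x), one has ∫_α^β (f(x) − f*(x))² dx + ∫_α^β (f'(x) − f*'(x))² dx < ε, where f' denotes the derivative of f. -/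
open Matrix

/-!
Since `H` may have any real spectrum, a diagonal `H`, the uniform state and an observable
`M = A + Aᴴ` supported on the first row and column realize every function
`κ + Re ∑ₖ cₖ e^{iνₖx}`. By Stone–Weierstrass, exponentials `e^{iνx}` with `ν ≠ 0` span a
uniformly dense subspace of `C([α, β], ℂ)` (the constant `1` is their limit as `ν → 0`), so
`f*'` is uniformly close to such a sum. Integrating it term by term and fixing the constant at
`α` gives a realizable `f` whose derivative is uniformly close to `f*'`, and by the mean value
theorem so are the values of `f` to those of `f*`; both `L²` errors are then small.
-/

open Complex ComplexConjugate

section QuantumModel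

variable {d : ℕ}

lemma quantumModel_add (H M N : Matrix (Fin d) (Fin d) ℂ) (Γ : Fin d → ℂ) (x : ℝ) :
    quantumModel H (M + N) Γ x = quantumModel H M Γ x + quantumModel H N Γ x := by
  simp only [quantumModel, mul_add, add_mul, add_mulVec, dotProduct_add]

lemma quantumModel_conjTranspose {H : Matrix (Fin d) (Fin d) ℂ} (hH : H.IsHermitian)
    (M : Matrix (Fin d) (Fin d) ℂ) (Γ : Fin d → ℂ) (x : ℝ) :
    quantumModel H Mᴴ Γ x = conj (quantumModel H M Γ x) := by
  have hU : (NormedSpace.exp ((I * x) • H))ᴴ = NormedSpace.exp ((-(I * x)) • H) := by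
    rw [← Matrix.exp_conjTranspose, conjTranspose_smul, hH.eq]
    simp
  rw [quantumModel, quantumModel, ← hU, star_dotProduct, star_mulVec, ← dotProduct_mulVec]
  simp [conjTranspose_mul, Matrix.mul_assoc]

lemma quantumModel_diagonal (lam : Fin d → ℝ) (M : Matrix (Fin d) (Fin d) ℂ)
    (Γ : Fin d → ℂ) (x : ℝ) :
    quantumModel (diagonal fun j => (lam j : ℂ)) M Γ x =
      ∑ j, ∑ k, star (Γ j) * M j k * Γ k * exp ((lam j - lam k) * x * I) := by
  rw [quantumModel, ← diagonal_smul, ← diagonal_smul, Matrix.exp_diagonal, Matrix.exp_diagonal]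
  simp only [mulVec, dotProduct, diagonal_mul, mul_diagonal, Finset.mul_sum, Pi.coe_exp,
    Pi.star_apply, Pi.smul_apply, smul_eq_mul, ← Complex.exp_eq_exp_ℂ]
  refine Finset.sum_congr rfl fun j _ => Finset.sum_congr rfl fun k _ => ?_
  rw [show ((lam j : ℂ) - lam k) * x * I = I * x * lam j + -(I * x) * lam k by ring, exp_add]
  ring

end QuantumModel

noncomputable def expSum {n : ℕ} (c : Fin n → ℂ) (ν : Fin n → ℝ) (x : ℝ) : ℂ :=
  ∑ k, c k * exp (ν k * x * I)

lemma expSum_cons {n : ℕ} (c₀ : ℂ) (c : Fin n → ℂ) (ν : Fin n → ℝ) (x : ℝ) :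
    expSum (Fin.cons c₀ c) (Fin.cons 0 ν) x = c₀ + expSum c ν x := by
  simp [expSum, Fin.sum_univ_succ]

lemma expSum_smul {n : ℕ} (a : ℂ) (c : Fin n → ℂ) (ν : Fin n → ℝ) (x : ℝ) :
    expSum (a • c) ν x = a * expSum c ν x := by
  simp [expSum, Finset.mul_sum, mul_assoc]

lemma quantumModel_diagonal_firstRow {n : ℕ} (ν : Fin (n + 1) → ℝ) (hν : ν 0 = 0)
    (r : Fin (n + 1) → ℂ) (t : ℝ) (x : ℝ) :
    quantumModel (diagonal fun j => ((-ν j : ℝ) : ℂ)) (of (Fin.cons r 0)) (fun _ => t) x =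
      t ^ 2 * expSum r ν x := by
  rw [quantumModel_diagonal, Fin.sum_univ_succ]
  simp only [of_apply, Fin.cons_zero, Fin.cons_succ, Pi.zero_apply, mul_zero, zero_mul,
    Finset.sum_const_zero, add_zero, hν, neg_zero, ofReal_zero, zero_sub, ofReal_neg, neg_neg,
    expSum, Finset.mul_sum, star_def, conj_ofReal]
  exact Finset.sum_congr rfl fun k _ => by ring

theorem exists_quantumModel_eq_re_expSum {n : ℕ} (κ : ℝ) (c : Fin n → ℂ) (ν : Fin n → ℝ) :
    ∃ (H M : Matrix (Fin (n + 1)) (Fin (n + 1)) ℂ) (Γ : Fin (n + 1) → ℂ),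
      H.IsHermitian ∧ M.IsHermitian ∧ star Γ ⬝ᵥ Γ = 1 ∧
      ∀ x, quantumModel H M Γ x = ((κ + (expSum c ν x).re : ℝ) : ℂ) := by
  obtain ⟨t, ht⟩ : ∃ t : ℝ, (t : ℂ) ^ 2 * (n + 1) = 1 := by
    refine ⟨(√(n + 1))⁻¹, ?_⟩
    have : (√(n + 1))⁻¹ ^ 2 * (n + 1) = (1 : ℝ) := by
      rw [inv_pow, Real.sq_sqrt (by positivity), inv_mul_cancel₀ (by positivity)]
    exact_mod_cast this
  -- `t = 1/√(n+1)` normalizes `Γ`; the factor `(n+1)/2` in `A` cancels `t²` and the `2`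
  -- coming from `A + Aᴴ`.
  let A : Matrix (Fin (n + 1)) (Fin (n + 1)) ℂ :=
    of (Fin.cons (((n + 1) / 2 : ℂ) • Fin.cons (κ : ℂ) c) 0)
  have hH : (diagonal fun j => ((-(Fin.cons 0 ν : Fin (n + 1) → ℝ) j : ℝ) : ℂ)).IsHermitian :=
    isHermitian_diagonal_of_self_adjoint _ (by ext; simp)
  refine ⟨_, A + Aᴴ, fun _ => t, hH, isHermitian_add_transpose_self A, ?_, fun x => ?_⟩
  · simp only [dotProduct, Pi.star_apply, RCLike.star_def, conj_ofReal, Finset.sum_const,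
      Finset.card_univ, Fintype.card_fin, nsmul_eq_mul, Nat.cast_add, Nat.cast_one]
    linear_combination ht
  · rw [quantumModel_add, quantumModel_conjTranspose hH, add_conj,
      quantumModel_diagonal_firstRow _ rfl, expSum_smul, expSum_cons]
    have hscale : (t : ℂ) ^ 2 * ((n + 1) / 2 * (κ + expSum c ν x)) = (κ + expSum c ν x) / 2 := by
      linear_combination (κ + expSum c ν x) / 2 * ht
    rw [hscale, div_ofNat_re, add_re, ofReal_re]
    push_cast
    ring

lemma hasDerivAt_expSum {n : ℕ} (c : Fin n → ℂ) (ν : Fin n → ℝ) (x : ℝ) :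
    HasDerivAt (expSum c ν) (expSum (fun k => c k * (ν k * I)) ν x) x := by
  have hlin (k : Fin n) : HasDerivAt (fun y : ℝ => (ν k : ℂ) * y * I) (ν k * I) x := by
    simpa using ((hasDerivAt_id (x : ℂ)).comp_ofReal.const_mul (ν k : ℂ)).mul_const I
  refine (HasDerivAt.fun_sum (u := Finset.univ) fun k _ =>
    (hlin k).cexp.const_mul (c k)).congr_deriv ?_
  exact Finset.sum_congr rfl fun k _ => by ring

lemma hasDerivAt_re_expSum_div {n : ℕ} (c : Fin n → ℂ) {ν : Fin n → ℝ} (hν : ∀ k, ν k ≠ 0)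
    (x : ℝ) :
    HasDerivAt (fun y => (expSum (fun k => c k / (ν k * I)) ν y).re) (expSum c ν x).re x := by
  refine (reCLM.hasFDerivAt.comp_hasDerivAt x
    (hasDerivAt_expSum (fun k => c k / (ν k * I)) ν x)).congr_deriv ?_
  simp only [reCLM_apply, expSum]
  congr 1
  refine Finset.sum_congr rfl fun k _ => ?_
  rw [div_mul_cancel₀ _ (mul_ne_zero (ofReal_ne_zero.2 (hν k)) I_ne_zero)]

open Set Submodule
open scoped Real

section Exponentials

variable (s : Set ℝ)

noncomputable def expOn : C(ℝ, C(s, ℂ)) :=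
  ContinuousMap.curry ⟨fun p : ℝ × s => exp (p.1 * p.2 * I), by fun_prop⟩

variable {s}

@[simp]
lemma expOn_apply (ν : ℝ) (x : s) : expOn s ν x = exp (ν * x * I) := rfl

lemma expOn_zero : expOn s 0 = 1 := by
  ext x
  simp

lemma expOn_add (ν μ : ℝ) : expOn s (ν + μ) = expOn s ν * expOn s μ := by
  ext x
  simp only [expOn_apply, ContinuousMap.mul_apply, ← exp_add]
  push_cast
  ring_nf

lemma star_expOn (ν : ℝ) : star (expOn s ν) = expOn s (-ν) := by
  ext x
  simp only [ContinuousMap.star_apply, expOn_apply, star_def, ← exp_conj]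
  simp [conj_ofReal]

variable (s)

noncomputable def expSubalgebra : StarSubalgebra ℂ C(s, ℂ) where
  toSubalgebra := Algebra.adjoin ℂ (range (expOn s))
  star_mem' := by
    change Algebra.adjoin ℂ (range (expOn s)) ≤ star (Algebra.adjoin ℂ (range (expOn s)))
    refine Algebra.adjoin_le ?_
    rintro - ⟨ν, rfl⟩
    exact Algebra.subset_adjoin ⟨-ν, (star_expOn ν).symm⟩

lemma expSubalgebra_toSubmodule :
    Subalgebra.toSubmodule (expSubalgebra s).toSubalgebra = span ℂ (range (expOn s)) := by
  apply Algebra.adjoin_eq_span_of_subset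
  refine Subset.trans ?_ subset_span
  intro f hf
  refine Submonoid.closure_induction (fun _ => id) ⟨0, expOn_zero⟩ ?_ hf
  rintro - - - - ⟨ν, rfl⟩ ⟨μ, rfl⟩
  exact ⟨ν + μ, expOn_add ν μ⟩

lemma expSubalgebra_separatesPoints : (expSubalgebra s).SeparatesPoints := by
  intro x y hxy
  set ν : ℝ := π / (x - y)
  refine ⟨_, ⟨expOn s ν, Algebra.subset_adjoin ⟨ν, rfl⟩, rfl⟩, fun h => ?_⟩
  have hxy' : (x : ℂ) - y ≠ 0 := by exact_mod_cast sub_ne_zero.2 (Subtype.coe_ne_coe.2 hxy)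
  have hshift : exp (ν * x * I) = -exp (ν * y * I) := by
    rw [show (ν : ℂ) * x * I = π * I + ν * y * I by simp only [ν]; push_cast; field_simp; ring,
      exp_add, exp_pi_mul_I, neg_one_mul]
  have hy : exp (ν * y * I) = -exp (ν * y * I) := (h : expOn s ν x = expOn s ν y).symm.trans hshift
  exact exp_ne_zero _ (by linear_combination hy / 2)

lemma span_expOn_ne_zero_closure_eq_top [CompactSpace s] :
    (span ℂ (expOn s '' {0}ᶜ)).topologicalClosure = ⊤ := by
  have hall : (span ℂ (range (expOn s))).topologicalClosure = ⊤ := by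
    rw [← expSubalgebra_toSubmodule]
    exact congr_arg (Subalgebra.toSubmodule <| StarSubalgebra.toSubalgebra ·)
      (ContinuousMap.starSubalgebra_topologicalClosure_eq_top_of_separatesPoints _
        (expSubalgebra_separatesPoints s))
  refine eq_top_iff.2 (hall.ge.trans (topologicalClosure_minimal _ ?_ isClosed_closure))
  rw [span_le, topologicalClosure_coe, ← image_univ,
    ← (dense_compl_singleton (0 : ℝ)).closure_eq]
  exact (image_closure_subset_closure_image (expOn s).continuous).trans (closure_mono subset_span)

end Exponentials

theorem exists_expSum_norm_sub_lt {s : Set ℝ} (hs : IsCompact s) {g : ℝ → ℂ}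
    (hg : ContinuousOn g s) {δ : ℝ} (hδ : 0 < δ) :
    ∃ (n : ℕ) (c : Fin n → ℂ) (ν : Fin n → ℝ),
      (∀ k, ν k ≠ 0) ∧ ∀ x ∈ s, ‖expSum c ν x - g x‖ < δ := by
  have := isCompact_iff_compactSpace.1 hs
  let G : C(s, ℂ) := ⟨s.domRestrict g, hg.domRestrict⟩
  have hG : G ∈ closure (span ℂ (expOn s '' {0}ᶜ) : Set C(s, ℂ)) := by
    rw [← topologicalClosure_coe, span_expOn_ne_zero_closure_eq_top]
    trivial
  obtain ⟨h, hh, hGh⟩ := Metric.mem_closure_iff.1 hG δ hδ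
  obtain ⟨n, c, e, rfl⟩ := mem_span_set'.1 hh
  choose ν hν0 hν using fun k => (e k).2
  refine ⟨n, c, ν, hν0, fun x hx => ?_⟩
  calc ‖expSum c ν x - g x‖ = dist ((∑ k, c k • (e k : C(s, ℂ))) ⟨x, hx⟩) (G ⟨x, hx⟩) := by
        simp only [expSum, ← hν, ContinuousMap.coe_sum, ContinuousMap.coe_smul, Finset.sum_apply,
          Pi.smul_apply, expOn_apply, smul_eq_mul, dist_eq]
        rfl
    _ ≤ dist (∑ k, c k • (e k : C(s, ℂ))) G := ContinuousMap.dist_apply_le_dist _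
    _ < δ := by rwa [dist_comm]

noncomputable def sqH1Dist (α β : ℝ) (f g : ℝ → ℝ) : ℝ :=
  (∫ x in α..β, (f x - g x) ^ 2) + ∫ x in α..β, (deriv f x - deriv g x) ^ 2

theorem sqH1Dist_le_of_abs_deriv_sub_le {f g : ℝ → ℝ} {α β δ : ℝ} (hf : Differentiable ℝ f)
    (hg : Differentiable ℝ g) (hfg : f α = g α)
    (hδ : ∀ x ∈ uIcc α β, |deriv f x - deriv g x| ≤ δ) :
    sqH1Dist α β f g ≤ δ ^ 2 * (|β - α| ^ 2 + 1) * |β - α| := by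
  have hδ0 : 0 ≤ δ := (abs_nonneg _).trans (hδ α left_mem_uIcc)
  have hval (x) (hx : x ∈ uIcc α β) : |f x - g x| ≤ δ * |β - α| := by
    have h := (convex_uIcc α β).norm_image_sub_le_of_norm_deriv_le (f := f - g)
      (fun y _ => (hf y).sub (hg y))
      (fun y hy => by rw [deriv_sub (hf y) (hg y)]; exact hδ y hy) left_mem_uIcc hx
    simp only [Pi.sub_apply, hfg, sub_self, sub_zero, Real.norm_eq_abs] at h
    exact h.trans (mul_le_mul_of_nonneg_left (abs_sub_left_of_mem_uIcc hx) hδ0)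
  have hsq {u C : ℝ} (h : |u| ≤ C) : ‖u ^ 2‖ ≤ C ^ 2 := by
    rw [norm_pow, Real.norm_eq_abs]
    exact pow_le_pow_left₀ (abs_nonneg u) h 2
  have h₀ := intervalIntegral.norm_integral_le_of_norm_le_const
    fun x hx => hsq (hval x (uIoc_subset_uIcc hx))
  have h₁ := intervalIntegral.norm_integral_le_of_norm_le_const
    fun x hx => hsq (hδ x (uIoc_subset_uIcc hx))
  calc sqH1Dist α β f g
      ≤ ‖∫ x in α..β, (f x - g x) ^ 2‖ + ‖∫ x in α..β, (deriv f x - deriv g x) ^ 2‖ :=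
        add_le_add (le_abs_self _) (le_abs_self _)
    _ ≤ (δ * |β - α|) ^ 2 * |β - α| + δ ^ 2 * |β - α| := add_le_add h₀ h₁
    _ = δ ^ 2 * (|β - α| ^ 2 + 1) * |β - α| := by ring

theorem quantumModel_dense_H1_general (fstar : ℝ → ℝ) (hfstar : ContDiff ℝ 2 fstar)
    (α β : ℝ) (ε : ℝ) (hε : 0 < ε) :
    ∃ (d : ℕ) (H M : Matrix (Fin d) (Fin d) ℂ) (Γ : Fin d → ℂ),
      H.IsHermitian ∧ M.IsHermitian ∧ star Γ ⬝ᵥ Γ = 1 ∧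
      (∀ x : ℝ, (quantumModel H M Γ x).im = 0) ∧
      (∫ x in α..β, ((quantumModel H M Γ x).re - fstar x) ^ 2) +
        (∫ x in α..β,
          (deriv (fun y => (quantumModel H M Γ y).re) x - deriv fstar x) ^ 2) < ε := by
  obtain ⟨δ, hδ, hδε⟩ : ∃ δ > 0, δ ^ 2 * (|β - α| ^ 2 + 1) * |β - α| < ε := by
    set K := (|β - α| ^ 2 + 1) * |β - α|
    refine ⟨√(ε / (K + 1)), by positivity, ?_⟩
    rw [mul_assoc, Real.sq_sqrt (by positivity), div_mul_eq_mul_div, div_lt_iff₀ (by positivity)]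
    nlinarith
  obtain ⟨n, c, ν, hν, hc⟩ := exists_expSum_norm_sub_lt isCompact_uIcc
    (continuous_ofReal.comp (hfstar.continuous_deriv one_le_two)).continuousOn hδ
  set b : Fin n → ℂ := fun k => c k / (ν k * I)
  set κ := fstar α - (expSum b ν α).re
  obtain ⟨H, M, Γ, hH, hM, hΓ, hmodel⟩ := exists_quantumModel_eq_re_expSum κ b ν
  have hderiv (y : ℝ) : HasDerivAt (fun y => κ + (expSum b ν y).re) (expSum c ν y).re y :=
    (hasDerivAt_re_expSum_div c hν y).const_add κ
  have hre : (fun y => (quantumModel H M Γ y).re) = fun y => κ + (expSum b ν y).re :=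
    funext fun y => by rw [hmodel, ofReal_re]
  refine ⟨n + 1, H, M, Γ, hH, hM, hΓ, fun x => by rw [hmodel, ofReal_im], ?_⟩
  calc _ = sqH1Dist α β (fun y => κ + (expSum b ν y).re) fstar := by rw [← hre]; rfl
    _ ≤ δ ^ 2 * (|β - α| ^ 2 + 1) * |β - α| := by
      refine sqH1Dist_le_of_abs_deriv_sub_le (fun y => (hderiv y).differentiableAt)
        (hfstar.differentiable two_ne_zero) (by simp [κ]) fun x hx => ?_
      rw [(hderiv x).deriv]
      calc |(expSum c ν x).re - deriv fstar x| = |(expSum c ν x - deriv fstar x).re| := by simp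
        _ ≤ ‖expSum c ν x - deriv fstar x‖ := abs_re_le_norm _
        _ ≤ δ := (hc x hx).le
    _ < ε := hδε

/-- Convergence in `H¹`: quantum models approximate `C²` functions on `[α, β] ⊂ (0, 2π)`
simultaneously in value and derivative in the `L²` sense. -/
theorem quantumModel_dense_H1 (fstar : ℝ → ℝ) (hfstar : ContDiff ℝ 2 fstar)
    (α β : ℝ) (hα : 0 < α) (hαβ : α < β) (hβ : β < 2 * Real.pi)
    (ε : ℝ) (hε : 0 < ε) :
    ∃ (d : ℕ) (H M : Matrix (Fin d) (Fin d) ℂ) (Γ : Fin d → ℂ),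
      H.IsHermitian ∧ M.IsHermitian ∧ star Γ ⬝ᵥ Γ = 1 ∧
      (∀ x : ℝ, (quantumModel H M Γ x).im = 0) ∧
      (∫ x in α..β, ((quantumModel H M Γ x).re - fstar x) ^ 2) +
        (∫ x in α..β,
          (deriv (fun y => (quantumModel H M Γ y).re) x - deriv fstar x) ^ 2) < ε :=
  quantumModel_dense_H1_general fstar hfstar α β ε hε
end
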